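/- arXiv:2303.00993 — 2 statements merged into one kernel-verified Lean document; each statement's English description precedes it below -/
import Mathlib

section
/- If I ⊆ [0,1] satisfies the ACC, then the set Φ(I) = {1 − r/m : r ∈ I, m a positive integer} satisfies the DCC. -/
def IsDCC (S : Set ℝ) : Prop :=
  ∀ f : ℕ → ℝ, (∀ n, f n ∈ S) → Antitone f → ∃ N, ∀ n, N ≤ n → f n = f N

def IsACC (S : Set ℝ) : Prop :=
  ∀ f : ℕ → ℝ, (∀ n, f n ∈ S) → Monotone f → ∃ N, ∀ n, N ≤ n → f n = f N

/-!
Below `1 - ε` only the finitely many denominators `m ≤ 1/ε` occur, because `r ≤ 1`; each of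
them contributes the image of `I` under the strictly decreasing map `r ↦ 1 - r/m`, which turns
the ACC of `I` into the DCC. A finite union of DCC sets is DCC, and a non-increasing sequence
in `Φ(I)` is either constantly `1` or eventually below some `1 - ε`.
-/

open Filter Set

theorem Antitone.exists_eq_of_subseq {α : Type*} [PartialOrder α] {f : ℕ → α} (hf : Antitone f)
    {φ : ℕ → ℕ} (hφ : StrictMono φ) (h : ∃ N, ∀ n, N ≤ n → f (φ n) = f (φ N)) :
    ∃ N, ∀ n, N ≤ n → f n = f N := by
  obtain ⟨N, hN⟩ := h
  refine ⟨φ N, fun n hn => le_antisymm (hf hn) ?_⟩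
  calc f (φ N) = f (φ (max N n)) := (hN _ (le_max_left N n)).symm
    _ ≤ f n := hf ((le_max_right N n).trans hφ.le_apply)

theorem IsDCC.mono {S T : Set ℝ} (hS : IsDCC S) (hTS : T ⊆ S) : IsDCC T :=
  fun f hf => hS f fun n => hTS (hf n)

theorem IsDCC.biUnion {ι : Type*} {s : Set ι} (hs : s.Finite) {S : ι → Set ℝ}
    (hS : ∀ i ∈ s, IsDCC (S i)) : IsDCC (⋃ i ∈ s, S i) := by
  intro f hf hanti
  have hfreq : ∃ᶠ n in atTop, ∃ i ∈ s, f n ∈ S i :=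
    Eventually.frequently (Eventually.of_forall fun n => by
      obtain ⟨i, hi, hfi⟩ := mem_iUnion₂.mp (hf n)
      exact ⟨i, hi, hfi⟩)
  obtain ⟨i, hi, hfreq_i⟩ := hs.frequently_exists.mp hfreq
  obtain ⟨φ, hφ, hφS⟩ := extraction_of_frequently_atTop hfreq_i
  exact hanti.exists_eq_of_subseq hφ (hS i hi (f ∘ φ) hφS (hanti.comp_monotone hφ.monotone))

theorem IsACC.isDCC_image {I : Set ℝ} (hI : IsACC I) {g : ℝ → ℝ} (hg : StrictAntiOn g I) :
    IsDCC (g '' I) := by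
  intro f hf hanti
  choose r hrI hfr using hf
  have hr : Monotone r := monotone_nat_of_le_succ fun n =>
    (hg.le_iff_ge (hrI (n + 1)) (hrI n)).mp (by simpa only [hfr] using hanti n.le_succ)
  obtain ⟨N, hN⟩ := hI r hrI hr
  exact ⟨N, fun n hn => by rw [← hfr, ← hfr, hN n hn]⟩

theorem IsDCC.of_subset_Iic {S : Set ℝ} {c : ℝ} (hSc : S ⊆ Iic c)
    (h : ∀ b < c, IsDCC (S ∩ Iic b)) : IsDCC S := by
  intro f hf hanti
  by_cases hconst : ∀ n, f n = c
  · exact ⟨0, fun n _ => by rw [hconst n, hconst 0]⟩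
  obtain ⟨n₀, hn₀⟩ := not_forall.mp hconst
  have htail : ∀ n, f (n + n₀) ∈ S ∩ Iic (f n₀) := fun n =>
    ⟨hf _, hanti (Nat.le_add_left n₀ n)⟩
  obtain ⟨N, hN⟩ := h (f n₀) (lt_of_le_of_ne (hSc (hf n₀)) hn₀) (fun n => f (n + n₀)) htail
    fun a b hab => hanti (Nat.add_le_add_right hab n₀)
  exact ⟨N + n₀, fun n hn => by
    simpa only [Nat.sub_add_cancel (by omega : n₀ ≤ n)] using hN (n - n₀) (by omega)⟩

theorem phi_inter_Iic_subset {I : Set ℝ} (hI : I ⊆ Iic 1) {b : ℝ} (hb : b < 1) :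
    {x : ℝ | ∃ r ∈ I, ∃ m : ℕ, 0 < m ∧ x = 1 - r / m} ∩ Iic b ⊆
      ⋃ m ∈ Finset.Icc 1 ⌊1 / (1 - b)⌋₊, (fun r => 1 - r / m) '' I := by
  rintro x ⟨⟨r, hr, m, hm, rfl⟩, hxb⟩
  have hmR : (0 : ℝ) < m := Nat.cast_pos.mpr hm
  have hmb : (m : ℝ) * (1 - b) ≤ 1 := by
    have : (1 - b) ≤ r / m := by simp only [mem_Iic] at hxb; linarith
    calc (m : ℝ) * (1 - b) ≤ m * (r / m) := by gcongr
      _ = r := by field_simp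
      _ ≤ 1 := hI hr
  refine mem_biUnion (x := m) ?_ ⟨r, hr, rfl⟩
  exact Finset.mem_Icc.mpr ⟨hm, Nat.le_floor ((le_div_iff₀ (by linarith)).mpr hmb)⟩

theorem dcc_Phi (I : Set ℝ) (hI : I ⊆ Set.Icc 0 1) (hacc : IsACC I) :
    IsDCC {x : ℝ | ∃ r ∈ I, ∃ m : ℕ, 0 < m ∧ x = 1 - r / m} := by
  refine IsDCC.of_subset_Iic (c := 1) ?_ fun b hb => ?_
  · rintro x ⟨r, hr, m, -, rfl⟩
    simp only [mem_Iic, sub_le_self_iff]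
    exact div_nonneg (hI hr).1 m.cast_nonneg
  · refine IsDCC.mono ?_ (phi_inter_Iic_subset (fun r hr => (hI hr).2) hb)
    refine IsDCC.biUnion (Finset.finite_toSet _) fun m hm => hacc.isDCC_image ?_
    have hmR : (0 : ℝ) < m := Nat.cast_pos.mpr (Finset.mem_Icc.mp hm).1
    exact fun r _ s _ hrs => by simpa only [sub_lt_sub_iff_left] using div_lt_div_of_pos_right hrs hmR
end

section
/- The closure (in ℝ) of a set of real numbers satisfying the DCC also satisfies the DCC, provided the set is bounded below. -/
/-! A descending sequence in the closure can be interleaved with points of `S`: the point `g (2k+1)`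
of the closure has a point of `S` in the open interval `(g (2k+2), g (2k))` around it, and these
points of `S` again descend strictly. -/

open Set

theorem isDCC_iff_isWF (S : Set ℝ) : IsDCC S ↔ S.IsWF := by
  constructor
  · intro hS
    rw [isWF_iff_no_descending_seq]
    intro f hf hfS
    obtain ⟨N, hN⟩ := hS f hfS hf.antitone
    exact (hf (Nat.lt_succ_self N)).ne (hN (N + 1) N.le_succ)
  · intro hS f hfS hf
    have hne : (range f).Nonempty := range_nonempty f
    have hwf : (range f).IsWF := hS.mono (range_subset_iff.2 hfS)
    obtain ⟨N, hN⟩ := hwf.min_mem hne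
    refine ⟨N, fun n hn => le_antisymm (hf hn) ?_⟩
    rw [hN]
    exact not_lt.1 (hwf.not_lt_min hne (mem_range_self n))

theorem Set.IsWF.closure {α : Type*} [TopologicalSpace α] [LinearOrder α]
    [OrderClosedTopology α] {S : Set α} (hS : S.IsWF) : (closure S).IsWF := by
  rw [isWF_iff_no_descending_seq] at hS ⊢
  intro g hg hgS
  have hmeet : ∀ k, (Ioo (g (2 * k + 2)) (g (2 * k)) ∩ S).Nonempty := fun k =>
    mem_closure_iff.1 (hgS (2 * k + 1)) _ isOpen_Ioo ⟨hg (by omega), hg (by omega)⟩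
  choose s hs using hmeet
  refine hS s (strictAnti_nat_of_succ_lt fun k => ?_) fun k => (hs k).2
  calc s (k + 1) < g (2 * (k + 1)) := (hs (k + 1)).1.2
    _ = g (2 * k + 2) := by ring_nf
    _ < s k := (hs k).1.1

theorem dcc_closure_general (S : Set ℝ) (hS : IsDCC S) :
    IsDCC (closure S) := by
  rw [isDCC_iff_isWF] at hS ⊢
  exact hS.closure

theorem dcc_closure (S : Set ℝ) (hb : BddBelow S) (hS : IsDCC S) :
    IsDCC (closure S) :=
  dcc_closure_general S hS
end
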